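/- Let κ ≥ 3 be a cardinal and let α ≥ 1 be a countable ordinal. Then the metric space (T_κ^{[α]}, d) is not complete. More precisely, there exists a Cauchy sequence (a_n)_{n∈ℕ} in T_κ^{[α]} whose limit a in T_κ satisfies comp(a) = α + 1, so a ∉ T_κ^{[α]}. -/

import Mathlib

open Set Filter

noncomputable section

/-- `C` is a valid label set for the valence cardinal `κ`:
`|C| = κ` if `κ` is infinite and `|C| + 1 = κ` (i.e. `|C| = κ - 1`) if `κ` is finite. -/
def IsLabelSet (κ : Cardinal) (C : Type) : Prop :=
  (Cardinal.aleph0 ≤ κ → Cardinal.mk C = κ) ∧ (κ < Cardinal.aleph0 → Cardinal.mk C + 1 = κ)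

/-- An ordinal is countable. -/
def IsCountableOrdinal (o : Ordinal) : Prop := o.card ≤ Cardinal.aleph0

/-- One-step Cantor–Bendixson derivative of a set: its non-isolated points. -/
def cbStep {X : Type*} [TopologicalSpace X] (A : Set X) : Set X :=
  {x | x ∈ A ∧ AccPt x (Filter.principal A)}

/-- The iterated Cantor–Bendixson derivative of a set. -/
def cbDeriv {X : Type*} [TopologicalSpace X] (A : Set X) (o : Ordinal) : Set X :=
  Ordinal.limitRecOn o A (fun _ ih => cbStep ih)
    (fun o _ ih => ⋂ (o' : Ordinal) (h : o' < o), ih o' h)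

/-- The Cantor–Bendixson rank of a set: the least ordinal `γ` such that the `(γ+1)`-st
Cantor–Bendixson derivative equals the `γ`-th one. -/
def cbRank {X : Type*} [TopologicalSpace X] (A : Set X) : Ordinal :=
  sInf {γ | cbDeriv A (γ + 1) = cbDeriv A γ}

theorem cbDeriv_zero {X : Type*} [TopologicalSpace X] (A : Set X) : cbDeriv A 0 = A :=
  Ordinal.limitRecOn_zero ..

theorem cbDeriv_one {X : Type*} [TopologicalSpace X] (A : Set X) :
    cbDeriv A 1 = cbStep A := by
  have : (1 : Ordinal) = Order.succ 0 := by
    rw [← Ordinal.add_one_eq_succ, zero_add]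
  rw [cbDeriv, this, Ordinal.limitRecOn_succ]
  rw [← cbDeriv, cbDeriv_zero]

theorem cbStep_empty {X : Type*} [TopologicalSpace X] : cbStep (∅ : Set X) = ∅ := by
  ext x; simp [cbStep]

theorem cbRank_empty {X : Type*} [TopologicalSpace X] : cbRank (∅ : Set X) = 0 := by
  refine le_antisymm ?_ zero_le
  refine csInf_le' ?_
  show cbDeriv (∅ : Set X) (0 + 1) = cbDeriv (∅ : Set X) 0
  rw [zero_add, cbDeriv_one, cbDeriv_zero, cbStep_empty]

/-- A point of Dyubina's universal real tree over the label set `C` (with distinguished label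
`z`): a function `(-∞, ρ) → C`, encoded as a total function on `ℝ` which takes the value `z`
on `[ρ, ∞)`, which is eventually `z` near `-∞` and piecewise constant from the right. -/
structure UTree (C : Type) (z : C) where
  ρ : ℝ
  f : ℝ → C
  apply_eq_of_ge : ∀ t, ρ ≤ t → f t = z
  eventually_zero : ∃ s, s ≤ ρ ∧ ∀ t, t < s → f t = z
  piecewise_const : ∀ t, t < ρ → ∃ ε > 0, ∀ u, t ≤ u → u ≤ t + ε → u < ρ → f u = f t

namespace UTree

variable {C : Type} {z : C}

theorem ext' {a b : UTree C z} (h1 : a.ρ = b.ρ) (h2 : a.f = b.f) : a = b := by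
  cases a; cases b; cases h1; cases h2; rfl

/-- The partial order `⪯` : `a ⪯ b` iff `a` is the restriction of `b` to `(-∞, ρ_a)`. -/
protected def le (a b : UTree C z) : Prop :=
  a.ρ ≤ b.ρ ∧ ∀ t, t < a.ρ → a.f t = b.f t

/-- The strict order `≺`. -/
protected def lt (a b : UTree C z) : Prop := a.le b ∧ a ≠ b

/-- The set of times up to which `a` and `b` agree. -/
def agreeSet (a b : UTree C z) : Set ℝ :=
  {t | t ≤ min a.ρ b.ρ ∧ ∀ u, u < t → a.f u = b.f u}

theorem agreeSet_nonempty (a b : UTree C z) : (agreeSet a b).Nonempty := by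
  obtain ⟨s₁, hs₁, h₁⟩ := a.eventually_zero
  obtain ⟨s₂, hs₂, h₂⟩ := b.eventually_zero
  refine ⟨min s₁ s₂, le_min ((min_le_left _ _).trans hs₁) ((min_le_right _ _).trans hs₂), ?_⟩
  intro u hu
  rw [h₁ u (lt_of_lt_of_le hu (min_le_left _ _)), h₂ u (lt_of_lt_of_le hu (min_le_right _ _))]

theorem agreeSet_bddAbove (a b : UTree C z) : BddAbove (agreeSet a b) :=
  ⟨min a.ρ b.ρ, fun _ ht => ht.1⟩

/-- `ρ_{a ∧ b}`, the height of the wedge of `a` and `b`. -/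
def wedgeρ (a b : UTree C z) : ℝ := sSup (agreeSet a b)

theorem wedgeρ_le_min (a b : UTree C z) : wedgeρ a b ≤ min a.ρ b.ρ :=
  csSup_le (agreeSet_nonempty a b) fun _ ht => ht.1

theorem agree_of_lt_wedgeρ (a b : UTree C z) {u : ℝ} (hu : u < wedgeρ a b) :
    a.f u = b.f u := by
  obtain ⟨t, ht, hut⟩ := exists_lt_of_lt_csSup (agreeSet_nonempty a b) hu
  exact ht.2 u hut

theorem le_wedgeρ {a b : UTree C z} {t : ℝ} (ht : t ∈ agreeSet a b) : t ≤ wedgeρ a b :=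
  le_csSup (agreeSet_bddAbove a b) ht

theorem wedgeρ_comm (a b : UTree C z) : wedgeρ a b = wedgeρ b a := by
  unfold wedgeρ agreeSet
  congr 1
  ext t
  constructor <;> rintro ⟨h1, h2⟩ <;>
    exact ⟨by rwa [min_comm], fun u hu => (h2 u hu).symm⟩

theorem wedgeρ_self (a : UTree C z) : wedgeρ a a = a.ρ := by
  refine le_antisymm ((wedgeρ_le_min a a).trans (by simp)) ?_
  exact le_wedgeρ ⟨by simp, fun _ _ => rfl⟩

/-- Restriction of `a` to `(-∞, s)` for `s ≤ ρ_a`. -/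
def restrict (a : UTree C z) (s : ℝ) (hs : s ≤ a.ρ) : UTree C z where
  ρ := s
  f := fun t => if t < s then a.f t else z
  apply_eq_of_ge := fun t ht => by
    show (if t < s then a.f t else z) = z
    rw [if_neg (not_lt.mpr ht)]
  eventually_zero := by
    obtain ⟨s', hs', h'⟩ := a.eventually_zero
    refine ⟨min s' s, min_le_right _ _, fun t ht => ?_⟩
    show (if t < s then a.f t else z) = z
    by_cases h : t < s
    · rw [if_pos h]; exact h' t (lt_of_lt_of_le ht (min_le_left _ _))
    · rw [if_neg h]
  piecewise_const := fun t ht => by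
    obtain ⟨ε, hε, h⟩ := a.piecewise_const t (lt_of_lt_of_le ht hs)
    refine ⟨ε, hε, fun u hu1 hu2 hu3 => ?_⟩
    show (if u < s then a.f u else z) = (if t < s then a.f t else z)
    rw [if_pos hu3, if_pos ht]
    exact h u hu1 hu2 (lt_of_lt_of_le hu3 hs)

/-- The wedge `a ∧ b`: the restriction of `a` to `(-∞, ρ_{a ∧ b})`. -/
def wedge (a b : UTree C z) : UTree C z :=
  a.restrict (wedgeρ a b) ((wedgeρ_le_min a b).trans (min_le_left _ _))

theorem min_wedgeρ_le (a b c : UTree C z) :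
    min (wedgeρ a b) (wedgeρ b c) ≤ wedgeρ a c := by
  refine le_wedgeρ ⟨le_min ?_ ?_, fun u hu => ?_⟩
  · exact (min_le_left _ _).trans ((wedgeρ_le_min a b).trans (min_le_left _ _))
  · exact (min_le_right _ _).trans ((wedgeρ_le_min b c).trans (min_le_right _ _))
  · have h1 : a.f u = b.f u :=
      agree_of_lt_wedgeρ a b (lt_of_lt_of_le hu (min_le_left _ _))
    have h2 : b.f u = c.f u :=
      agree_of_lt_wedgeρ b c (lt_of_lt_of_le hu (min_le_right _ _))
    exact h1.trans h2

/-- The metric `d(a,b) = ρ_a + ρ_b - 2 ρ_{a ∧ b}` on the universal real tree. -/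
instance : MetricSpace (UTree C z) where
  dist a b := a.ρ + b.ρ - 2 * wedgeρ a b
  dist_self a := by simp [wedgeρ_self]; ring
  dist_comm a b := by simp only [wedgeρ_comm a b]; ring
  dist_triangle a b c := by
    have hmin := min_wedgeρ_le a b c
    have h1 : wedgeρ a b ≤ b.ρ := (wedgeρ_le_min a b).trans (min_le_right _ _)
    have h2 : wedgeρ b c ≤ b.ρ := (wedgeρ_le_min b c).trans (min_le_left _ _)
    rcases min_cases (wedgeρ a b) (wedgeρ b c) with ⟨heq, hle⟩ | ⟨heq, hle⟩ <;>
      (rw [heq] at hmin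
       show a.ρ + c.ρ - 2 * wedgeρ a c ≤ a.ρ + b.ρ - 2 * wedgeρ a b + (b.ρ + c.ρ - 2 * wedgeρ b c)
       linarith)
  eq_of_dist_eq_zero := by
    intro a b h
    have h1 : wedgeρ a b ≤ a.ρ := (wedgeρ_le_min a b).trans (min_le_left _ _)
    have h2 : wedgeρ a b ≤ b.ρ := (wedgeρ_le_min a b).trans (min_le_right _ _)
    have hd : a.ρ + b.ρ - 2 * wedgeρ a b = 0 := h
    have ha : a.ρ = wedgeρ a b := by linarith
    have hb : b.ρ = wedgeρ a b := by linarith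
    refine ext' (ha.trans hb.symm) (funext fun t => ?_)
    by_cases ht : t < wedgeρ a b
    · exact agree_of_lt_wedgeρ a b ht
    · rw [a.apply_eq_of_ge t (ha.le.trans (not_lt.mp ht)),
        b.apply_eq_of_ge t (hb.le.trans (not_lt.mp ht))]

theorem dist_def (a b : UTree C z) : dist a b = a.ρ + b.ρ - 2 * wedgeρ a b := rfl

/-- The point `c_ℓ`: the constant function `(-∞, ℓ) → C` with value `z`. -/
def cconst (ℓ : ℝ) : UTree C z where
  ρ := ℓ
  f := fun _ => z
  apply_eq_of_ge := fun _ _ => rfl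
  eventually_zero := ⟨ℓ, le_refl ℓ, fun _ _ => rfl⟩
  piecewise_const := fun _ _ => ⟨1, one_pos, fun _ _ _ _ => rfl⟩

/-- The set of points at which `a` is locally non-constant from the left, whose closure is the
set `P_a`. -/
def badSet (a : UTree C z) : Set ℝ :=
  {t | t < a.ρ ∧ ∀ ε > 0, ∃ u ∈ Icc (t - ε) t, ∃ v ∈ Icc (t - ε) t, a.f u ≠ a.f v}

/-- The set `P_a`. -/
def Pset (a : UTree C z) : Set ℝ := closure (badSet a)

/-- The complexity of `a`: the Cantor–Bendixson rank of `P_a`. -/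
def comp (a : UTree C z) : Ordinal := cbRank (Pset a)

/-- The complexity of a pair `a ≺ b`: the Cantor–Bendixson rank of `P_b ∩ [ρ_a, ρ_b]`. -/
def pairComp (a b : UTree C z) : Ordinal := cbRank (Pset b ∩ Icc a.ρ b.ρ)

/-- `τ_a`: the maximum of all `s ≤ ρ_a` such that `a` is `z` below `s`. -/
def tau (a : UTree C z) : ℝ := sSup {s | s ≤ a.ρ ∧ ∀ t, t < s → a.f t = z}

/-- The tree `T_κ^{[α]}` of points of complexity at most `α`. -/
def level (z : C) (α : Ordinal) : Set (UTree C z) := {a | comp a ≤ α}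

theorem Pset_cconst (ℓ : ℝ) : Pset (cconst ℓ : UTree C z) = ∅ := by
  have : badSet (cconst ℓ : UTree C z) = ∅ := by
    ext t
    simp only [badSet, mem_setOf_eq, mem_empty_iff_false, iff_false, not_and]
    intro _
    push_neg
    exact ⟨1, one_pos, fun u _ v _ => rfl⟩
  rw [Pset, this, closure_empty]

theorem comp_cconst (ℓ : ℝ) : comp (cconst ℓ : UTree C z) = 0 := by
  rw [comp, Pset_cconst, cbRank_empty]

theorem cconst_mem_level {ℓ : ℝ} (α : Ordinal) : (cconst ℓ : UTree C z) ∈ level z α := by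
  show comp _ ≤ α
  rw [comp_cconst]
  exact zero_le

/-- The canonical line `L_0 = {c_ℓ : ℓ ∈ ℝ}`. -/
def L0 (z : C) : Set (UTree C z) := Set.range fun ℓ => (cconst ℓ : UTree C z)

/-- The extension of `a` by the label `c` on `[ρ_a, ρ_a + 1)`. -/
def extend (a : UTree C z) (c : C) : UTree C z where
  ρ := a.ρ + 1
  f := fun t => if t < a.ρ then a.f t else if t < a.ρ + 1 then c else z
  apply_eq_of_ge := fun t ht => by
    show (if t < a.ρ then a.f t else if t < a.ρ + 1 then c else z) = z
    rw [if_neg (not_lt.mpr (by linarith)), if_neg (not_lt.mpr ht)]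
  eventually_zero := by
    obtain ⟨s, hs, h⟩ := a.eventually_zero
    refine ⟨min s a.ρ, by have := min_le_right s a.ρ; linarith, fun t ht => ?_⟩
    show (if t < a.ρ then a.f t else if t < a.ρ + 1 then c else z) = z
    rw [if_pos (lt_of_lt_of_le ht (min_le_right _ _))]
    exact h t (lt_of_lt_of_le ht (min_le_left _ _))
  piecewise_const := by
    intro t ht
    by_cases htρ : t < a.ρ
    · obtain ⟨ε, hε, h⟩ := a.piecewise_const t htρ
      refine ⟨min ε ((a.ρ - t) / 2), lt_min hε (by linarith), fun u hu1 hu2 _ => ?_⟩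
      have hu3 : u < a.ρ := by
        have := hu2.trans (add_le_add_right (min_le_right _ _) t)
        linarith
      show (if u < a.ρ then a.f u else if u < a.ρ + 1 then c else z) =
        (if t < a.ρ then a.f t else if t < a.ρ + 1 then c else z)
      rw [if_pos hu3, if_pos htρ]
      exact h u hu1 (hu2.trans (add_le_add_right (min_le_left _ _) t)) hu3
    · refine ⟨(a.ρ + 1 - t) / 2, by linarith, fun u hu1 hu2 _ => ?_⟩
      have h1 : ¬u < a.ρ := by push_neg at htρ ⊢; linarith
      have h2 : u < a.ρ + 1 := by linarith
      show (if u < a.ρ then a.f u else if u < a.ρ + 1 then c else z) =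
        (if t < a.ρ then a.f t else if t < a.ρ + 1 then c else z)
      rw [if_neg h1, if_pos h2, if_neg htρ, if_pos ht]

end UTree

/-- A subset of a metric space is (geodesically) convex if it contains every point
metrically between two of its points. -/
def MetricConvex {X : Type*} [MetricSpace X] (S : Set X) : Prop :=
  ∀ x ∈ S, ∀ y ∈ S, ∀ w, dist x w + dist w y = dist x y → w ∈ S

/-- `D` is a direction at `x`: a connected component of the complement of `{x}`. -/
def IsDirectionAt {X : Type*} [TopologicalSpace X] (x : X) (D : Set X) : Prop :=
  ∃ y, y ≠ x ∧ D = connectedComponentIn {w | w ≠ x} y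

/-- The valence of a space at a point: the number of connected components of the
complement of that point. -/
def valenceAt {X : Type*} [TopologicalSpace X] (x : X) : Cardinal :=
  Cardinal.mk {D : Set X // IsDirectionAt x D}

/-- A real tree: a geodesic metric space in which any two points are joined by a unique arc. -/
def IsRealTree (X : Type*) [MetricSpace X] : Prop :=
  (∀ x y : X, ∃ γ : ℝ → X, γ 0 = x ∧ γ (dist x y) = y ∧
      ∀ s ∈ Icc (0 : ℝ) (dist x y), ∀ t ∈ Icc (0 : ℝ) (dist x y),
        dist (γ s) (γ t) = |s - t|) ∧
  (∀ (x y : X) (γ₁ γ₂ : Path x y), Function.Injective γ₁ → Function.Injective γ₂ →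
      Set.range γ₁ = Set.range γ₂)

/-!
The limit is a point `b` of height `1` using two labels: `b(t) = c` for `t ∈ U` and `b(t) = 0`
otherwise, where `U ⊆ [0, 1)` is chosen so that the `α`-th Cantor–Bendixson derivative of `P_b`
is `{1}` and the next one is empty. The restrictions of `b` to `(-∞, s)`, `s < 1`, converge to
`b`, and their `P`-sets stay away from `1`, so they have complexity at most `α`.

`U` is built by transfinite recursion, starting from `[1/2, 1)` at rank `0`: sets realizing
ranks below `α`, each rank used infinitely often, are shrunk by increasing affine maps into
disjoint windows accumulating at `1`. Cantor–Bendixson derivatives are local and commute with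
homeomorphisms, so at stage `α` only the accumulation point `1` survives.
-/

open Topology

universe u

section CantorBendixson

variable {X Y : Type*} [TopologicalSpace X] [TopologicalSpace Y]

theorem closure_inter_of_inter_eq {A B V : Set X} (hV : IsOpen V) (h : A ∩ V = B ∩ V) :
    closure A ∩ V = closure B ∩ V := by
  have key : ∀ {A B : Set X}, A ∩ V = B ∩ V → closure A ∩ V ⊆ closure B := by
    intro A B h x ⟨hxA, hxV⟩
    refine closure_mono ?_ (hV.inter_closure ⟨hxV, hxA⟩)
    rw [inter_comm, h]
    exact inter_subset_left
  exact subset_antisymm (subset_inter (key h) inter_subset_right)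
    (subset_inter (key h.symm) inter_subset_right)

theorem closure_diff_singleton_eq_of_accPt {A : Set X} {x : X} (h : AccPt x (𝓟 A)) :
    closure (A \ {x}) = closure A := by
  refine subset_antisymm (closure_mono sdiff_subset)
    (closure_minimal (fun y hy => ?_) isClosed_closure)
  rcases eq_or_ne y x with rfl | hne
  · exact mem_closure_iff_clusterPt.mpr (accPt_principal_iff_clusterPt.mp h)
  · exact subset_closure ⟨hy, hne⟩

theorem cbDeriv_succ (A : Set X) (o : Ordinal) :
    cbDeriv A (o + 1) = cbStep (cbDeriv A o) :=
  Ordinal.limitRecOn_add_one ..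

theorem cbDeriv_limit (A : Set X) {o : Ordinal} (ho : Order.IsSuccLimit o) :
    cbDeriv A o = ⋂ o' < o, cbDeriv A o' :=
  Ordinal.limitRecOn_limit (h := ho) ..

theorem cbStep_subset (A : Set X) : cbStep A ⊆ A := fun _ hx => hx.1

theorem cbStep_mono {A B : Set X} (h : A ⊆ B) : cbStep A ⊆ cbStep B :=
  fun _ hx => ⟨h hx.1, hx.2.mono (principal_mono.mpr h)⟩

theorem cbDeriv_mono {A B : Set X} (h : A ⊆ B) (o : Ordinal) : cbDeriv A o ⊆ cbDeriv B o := by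
  induction o using Ordinal.limitRecOn with
  | zero => simpa only [cbDeriv_zero] using h
  | add_one o ih => simpa only [cbDeriv_succ] using cbStep_mono ih
  | limit o ho ih =>
    rw [cbDeriv_limit _ ho, cbDeriv_limit _ ho]
    exact iInter₂_mono ih

theorem cbDeriv_antitone (A : Set X) : Antitone (cbDeriv A) := by
  refine antitone_iff_forall_lt.mpr fun o o' hlt => ?_
  induction o' using Ordinal.limitRecOn with
  | zero => exact absurd hlt (not_lt_of_ge zero_le)
  | add_one o' ih =>
    rw [cbDeriv_succ]
    rcases (Order.lt_add_one_iff.mp hlt).eq_or_lt with rfl | hlt'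
    · exact cbStep_subset _
    · exact (cbStep_subset _).trans (ih hlt')
  | limit o' ho _ =>
    rw [cbDeriv_limit _ ho]
    exact biInter_subset_of_mem hlt

theorem cbDeriv_subset (A : Set X) (o : Ordinal) : cbDeriv A o ⊆ A := by
  simpa only [cbDeriv_zero] using cbDeriv_antitone A (zero_le : 0 ≤ o)

theorem cbStep_eq_empty_of_finite [T1Space X] {A : Set X} (hA : A.Finite) : cbStep A = ∅ :=
  eq_empty_of_forall_notMem fun _ hx => Set.Infinite.of_accPt hx.2 hA

theorem cbStep_inter_of_inter_eq {A B V : Set X} (hV : IsOpen V) (h : A ∩ V = B ∩ V) :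
    cbStep A ∩ V = cbStep B ∩ V := by
  have key : ∀ {A B : Set X}, A ∩ V = B ∩ V → cbStep A ∩ V ⊆ cbStep B := by
    intro A B h x ⟨⟨hxA, hacc⟩, hxV⟩
    refine ⟨(h.le ⟨hxA, hxV⟩).1, ?_⟩
    rw [accPt_iff_frequently] at hacc ⊢
    exact hacc.mp (eventually_of_mem (hV.mem_nhds hxV) fun y hyV hy =>
      ⟨hy.1, (h.le ⟨hy.2, hyV⟩).1⟩)
  exact subset_antisymm (subset_inter (key h) inter_subset_right)
    (subset_inter (key h.symm) inter_subset_right)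

theorem cbDeriv_inter_of_inter_eq {A B V : Set X} (hV : IsOpen V) (h : A ∩ V = B ∩ V)
    (o : Ordinal) : cbDeriv A o ∩ V = cbDeriv B o ∩ V := by
  induction o using Ordinal.limitRecOn with
  | zero => simpa only [cbDeriv_zero] using h
  | add_one o ih => simpa only [cbDeriv_succ] using cbStep_inter_of_inter_eq hV ih
  | limit o ho ih =>
    ext x
    simp only [cbDeriv_limit _ ho, mem_inter_iff, mem_iInter₂]
    refine and_congr_left fun hxV => forall₂_congr fun o' ho' => ?_
    simpa only [mem_inter_iff, hxV, and_true] using Set.ext_iff.mp (ih o' ho') x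

theorem image_cbStep_subset (e : X ≃ₜ Y) (A : Set X) : e '' cbStep A ⊆ cbStep (e '' A) := by
  rintro _ ⟨x, ⟨hxA, hacc⟩, rfl⟩
  refine ⟨mem_image_of_mem e hxA, ?_⟩
  simpa only [map_principal] using hacc.map e.continuous.continuousAt e.injective

theorem cbStep_image (e : X ≃ₜ Y) (A : Set X) : cbStep (e '' A) = e '' cbStep A := by
  refine subset_antisymm ?_ (image_cbStep_subset e A)
  simpa only [image_image, e.symm_apply_apply, e.apply_symm_apply, image_id'] using
    image_mono (f := e) (image_cbStep_subset e.symm (e '' A))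

theorem cbDeriv_image (e : X ≃ₜ Y) (A : Set X) (o : Ordinal) :
    cbDeriv (e '' A) o = e '' cbDeriv A o := by
  induction o using Ordinal.limitRecOn with
  | zero => simp only [cbDeriv_zero]
  | add_one o ih => rw [cbDeriv_succ, cbDeriv_succ, ih, cbStep_image]
  | limit o ho ih =>
    simp only [cbDeriv_limit _ ho, image_iInter e.bijective]
    exact iInter_congr fun o' => iInter_congr fun ho' => ih o' ho'

theorem cbDeriv_eq_of_succ_eq {A : Set X} {γ : Ordinal} (h : cbDeriv A (γ + 1) = cbDeriv A γ)
    {o : Ordinal} (ho : γ ≤ o) : cbDeriv A o = cbDeriv A γ := by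
  induction o using Ordinal.limitRecOn with
  | zero => rw [nonpos_iff_eq_zero.mp ho]
  | add_one o ih =>
    rcases ho.lt_or_eq with ho | rfl
    · rw [cbDeriv_succ, ih (Order.lt_add_one_iff.mp ho), ← cbDeriv_succ, h]
    · rfl
  | limit o hlim ih =>
    refine subset_antisymm (cbDeriv_antitone A ho) ?_
    rw [cbDeriv_limit _ hlim]
    refine subset_iInter₂ fun o' ho' => ?_
    rcases le_total o' γ with h' | h'
    · exact cbDeriv_antitone A h'
    · exact (ih o' ho' h').ge

theorem cbRank_le_of_cbDeriv_eq_empty {A : Set X} {o : Ordinal} (h : cbDeriv A o = ∅) :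
    cbRank A ≤ o :=
  csInf_le' (show cbDeriv A (o + 1) = _ by rw [cbDeriv_succ, h, cbStep_empty])

theorem cbRank_eq_add_one {A : Set X} {δ : Ordinal} (hne : (cbDeriv A δ).Nonempty)
    (hempty : cbDeriv A (δ + 1) = ∅) : cbRank A = δ + 1 := by
  refine le_antisymm (cbRank_le_of_cbDeriv_eq_empty hempty) (le_csInf ⟨δ + 1, ?_⟩ fun γ hγ => ?_)
  · show cbDeriv A (δ + 1 + 1) = _
    rw [cbDeriv_succ, hempty, cbStep_empty]
  · by_contra! hlt
    have hγδ : γ ≤ δ := Order.lt_add_one_iff.mp hlt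
    have := cbDeriv_eq_of_succ_eq hγ (hγδ.trans (le_self_add : δ ≤ δ + 1))
    rw [hempty] at this
    exact hne.ne_empty (subset_empty_iff.mp (this ▸ cbDeriv_antitone A hγδ))

end CantorBendixson

section LeftSwitch

variable {α β : Type*} [TopologicalSpace α] [LinearOrder α] [TopologicalSpace β] [LinearOrder β]

theorem OrderIso.map_nhdsLE [OrderTopology α] [OrderTopology β] (e : α ≃o β) (a : α) :
    map e (𝓝[≤] a) = 𝓝[≤] (e a) := by
  rw [← e.image_Iic]
  exact e.toHomeomorph.isEmbedding.map_nhdsWithin_eq _ a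

theorem OrderIso.map_nhdsGE [OrderTopology α] [OrderTopology β] (e : α ≃o β) (a : α) :
    map e (𝓝[≥] a) = 𝓝[≥] (e a) := by
  rw [← e.image_Ici]
  exact e.toHomeomorph.isEmbedding.map_nhdsWithin_eq _ a

/-- The points at which membership in `U` is not eventually constant on the left. When `f` takes
one value on `U` and another off `U`, the closure of this set is `P_f`. -/
def leftSwitch (U : Set α) : Set α :=
  {t | (∃ᶠ s in 𝓝[≤] t, s ∈ U) ∧ ∃ᶠ s in 𝓝[≤] t, s ∉ U}

theorem leftSwitch_subset_frontier (U : Set α) : leftSwitch U ⊆ frontier U := by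
  intro t ht
  rw [frontier_eq_closure_inter_closure]
  exact ⟨mem_closure_iff_frequently.mpr (ht.1.filter_mono nhdsWithin_le_nhds),
    mem_closure_iff_frequently.mpr (ht.2.filter_mono nhdsWithin_le_nhds)⟩

theorem closure_leftSwitch_subset_frontier (U : Set α) : closure (leftSwitch U) ⊆ frontier U :=
  closure_minimal (leftSwitch_subset_frontier U) isClosed_frontier

theorem leftSwitch_inter_of_inter_eq {U U' V : Set α} (hV : IsOpen V) (h : U ∩ V = U' ∩ V) :
    leftSwitch U ∩ V = leftSwitch U' ∩ V := by
  ext t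
  refine and_congr_left fun ht => ?_
  have hUU' : ∀ᶠ s in 𝓝[≤] t, s ∈ U ↔ s ∈ U' :=
    eventually_nhdsWithin_of_eventually_nhds <| eventually_of_mem (hV.mem_nhds ht)
      fun s hs => by simpa only [mem_inter_iff, hs, and_true] using Set.ext_iff.mp h s
  exact and_congr (frequently_congr hUU') (frequently_congr (hUU'.mono fun _ => not_congr))

theorem leftSwitch_image [OrderTopology α] [OrderTopology β] (e : α ≃o β) (U : Set α) :
    leftSwitch (e '' U) = e '' leftSwitch U := by
  have key : ∀ t, e t ∈ leftSwitch (e '' U) ↔ t ∈ leftSwitch U := fun t => by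
    simp only [leftSwitch, mem_ofPred_eq, ← e.map_nhdsLE, frequently_map,
      e.injective.mem_set_image]
  ext t
  obtain ⟨t, rfl⟩ := e.surjective t
  rw [key, e.injective.mem_set_image]

theorem eventually_nhdsGE_mem_image_iff [OrderTopology α] [OrderTopology β] (e : α ≃o β)
    {U : Set α} {a : α} (h : ∀ᶠ s in 𝓝[≥] a, s ∈ U ↔ a ∈ U) :
    ∀ᶠ s in 𝓝[≥] e a, s ∈ e '' U ↔ e a ∈ e '' U := by
  rw [← e.map_nhdsGE, eventually_map]
  simpa only [e.injective.mem_set_image] using h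

theorem right_mem_leftSwitch_Ico [OrderTopology α] [DenselyOrdered α] {a b : α} (hab : a < b) :
    b ∈ leftSwitch (Ico a b) :=
  haveI := nhdsLT_neBot_of_exists_lt ⟨a, hab⟩
  ⟨(Filter.Eventually.frequently (Ico_mem_nhdsLT hab)).filter_mono
      (nhdsWithin_mono b Iio_subset_Iic_self),
    (frequently_pure.mpr fun h => lt_irrefl b h.2).filter_mono (pure_le_nhdsWithin le_rfl)⟩

theorem eventually_nhdsGE_mem_Ico_iff [OrderTopology α] [DenselyOrdered α] [NoMaxOrder α]
    (a b t : α) : ∀ᶠ s in 𝓝[≥] t, s ∈ Ico a b ↔ t ∈ Ico a b := by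
  rcases lt_or_ge t a with hta | hat
  · filter_upwards [nhdsWithin_le_nhds (Iio_mem_nhds hta)] with s hs
    simp only [mem_Ico, hs.not_ge, hta.not_ge, false_and]
  rcases lt_or_ge t b with htb | hbt
  · filter_upwards [Ico_mem_nhdsGE htb] with s hs
    simp only [mem_Ico, hat, htb, and_self, iff_true]
    exact ⟨hat.trans hs.1, hs.2⟩
  · filter_upwards [self_mem_nhdsWithin] with s hs
    simp only [mem_Ico, (hbt.trans hs).not_gt, hbt.not_gt, and_false]

end LeftSwitch

theorem Real.mem_leftSwitch_iff {U : Set ℝ} {t : ℝ} : t ∈ leftSwitch U ↔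
    ∀ ε > 0, (∃ s ∈ Icc (t - ε) t, s ∈ U) ∧ ∃ s ∈ Icc (t - ε) t, s ∉ U := by
  simp only [leftSwitch, mem_ofPred_eq, nhdsLE_basis_Icc.frequently_iff, ← forall₂_and]
  constructor
  · exact fun h ε hε => h (t - ε) (by linarith)
  · intro h c hc
    simpa only [sub_sub_cancel] using h (t - c) (by linarith)

/-- Encodes a point of height `1` of the universal tree using two labels, see
`UTree.ofSwitchSet`. -/
structure IsSwitchSet (U : Set ℝ) : Prop where
  subset_Ico : U ⊆ Ico 0 1
  eventually_nhdsGE : ∀ t, ∀ᶠ s in 𝓝[≥] t, s ∈ U ↔ t ∈ U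

/-- Stage `δ` is only required to contain `1`, so that `[1/2, 1)`, whose switch points are
`1/2` and `1`, can start the recursion. -/
structure IsRankModel (δ : Ordinal) (U : Set ℝ) : Prop extends IsSwitchSet U where
  one_mem_cbDeriv : (1 : ℝ) ∈ cbDeriv (closure (leftSwitch U)) δ
  cbDeriv_add_one : cbDeriv (closure (leftSwitch U)) (δ + 1) = ∅

theorem IsSwitchSet.subset_Icc {U : Set ℝ} (hU : IsSwitchSet U) : U ⊆ Icc 0 1 :=
  hU.subset_Ico.trans Ico_subset_Icc_self

theorem IsSwitchSet.closure_leftSwitch_subset {U : Set ℝ} (hU : IsSwitchSet U) :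
    closure (leftSwitch U) ⊆ Icc 0 1 :=
  (closure_leftSwitch_subset_frontier U).trans <| frontier_subset_closure.trans <|
    closure_minimal hU.subset_Icc isClosed_Icc

theorem isRankModel_zero : IsRankModel 0 (Ico (1 / 2) 1) where
  subset_Ico := Ico_subset_Ico_left (by norm_num)
  eventually_nhdsGE := eventually_nhdsGE_mem_Ico_iff _ _
  one_mem_cbDeriv := by
    rw [cbDeriv_zero]
    exact subset_closure (right_mem_leftSwitch_Ico (by norm_num))
  cbDeriv_add_one := by
    rw [zero_add, cbDeriv_one]
    refine cbStep_eq_empty_of_finite ((toFinite {1 / 2, 1}).subset ?_)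
    rw [← frontier_Ico (by norm_num : (1 / 2 : ℝ) < 1)]
    exact closure_leftSwitch_subset_frontier _

section Glue

def glueScale (n : ℕ) : ℝ := (1 / 2) ^ n / 8

theorem glueScale_pos (n : ℕ) : 0 < glueScale n := by unfold glueScale; positivity

theorem glueScale_le (n : ℕ) : glueScale n ≤ 1 / 8 := by
  unfold glueScale
  have : ((1 : ℝ) / 2) ^ n ≤ 1 := pow_le_one₀ (by norm_num) (by norm_num)
  linarith

theorem two_mul_glueScale_le {m n : ℕ} (h : m < n) : 2 * glueScale n ≤ glueScale m := by
  have : ((1 : ℝ) / 2) ^ n ≤ (1 / 2) ^ (m + 1) := pow_le_pow_of_le_one (by norm_num) (by norm_num) h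
  rw [pow_succ] at this
  unfold glueScale
  linarith

/-- `glueMap n` sends `[0, 1]` onto `[1 - 7 s, 1 - 6 s]` with `s = glueScale n`; this interval
lies in `glueWindow n` and misses every other window, and the windows cover `[0, 1)`. -/
def glueMap (n : ℕ) : ℝ ≃o ℝ :=
  (OrderIso.mulLeft₀ _ (glueScale_pos n)).trans (OrderIso.addLeft (1 - 7 * glueScale n))

def glueWindow (n : ℕ) : Set ℝ := Ioo (1 - 9 * glueScale n) (1 - 4 * glueScale n)

theorem isOpen_glueWindow (n : ℕ) : IsOpen (glueWindow n) := isOpen_Ioo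

def glue (U : ℕ → Set ℝ) : Set ℝ := ⋃ n, glueMap n '' U n

theorem glueMap_apply (n : ℕ) (x : ℝ) : glueMap n x = 1 - (7 - x) * glueScale n := by
  simp only [glueMap, OrderIso.trans_apply, OrderIso.mulLeft₀_apply, OrderIso.addLeft_apply]
  ring

theorem glueMap_mem_glueWindow_iff {m n : ℕ} {x : ℝ} (hx : x ∈ Icc 0 1) :
    glueMap m x ∈ glueWindow n ↔ m = n := by
  rw [glueMap_apply, glueWindow, mem_Ioo]
  have hm := glueScale_pos m
  have hn := glueScale_pos n
  have h1 : (6 : ℝ) * glueScale m ≤ (7 - x) * glueScale m := by nlinarith [hx.2]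
  have h2 : (7 - x) * glueScale m ≤ 7 * glueScale m := by nlinarith [hx.1]
  rcases lt_trichotomy m n with hmn | rfl | hmn
  · have := two_mul_glueScale_le hmn
    exact iff_of_false (fun h => by linarith [h.1]) hmn.ne
  · exact iff_of_true ⟨by linarith, by linarith⟩ rfl
  · have := two_mul_glueScale_le hmn
    exact iff_of_false (fun h => by linarith [h.2]) hmn.ne'

theorem image_subset_glueWindow {A : Set ℝ} (hA : A ⊆ Icc 0 1) (n : ℕ) :
    glueMap n '' A ⊆ glueWindow n := by
  rintro _ ⟨x, hx, rfl⟩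
  exact (glueMap_mem_glueWindow_iff (hA hx)).mpr rfl

theorem exists_mem_glueWindow {t : ℝ} (h0 : 0 ≤ t) (h1 : t < 1) : ∃ n, t ∈ glueWindow n := by
  obtain ⟨n, hlt, hle⟩ := exists_nat_pow_near_of_lt_one (sub_pos.mpr h1) (by linarith)
    (by norm_num : (0 : ℝ) < 1 / 2) (by norm_num)
  refine ⟨n, ?_, ?_⟩ <;> rw [pow_succ] at hlt <;> unfold glueScale <;> linarith

theorem glueMap_image_Ico_subset (n : ℕ) : glueMap n '' Ico 0 1 ⊆ Ico 0 1 := by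
  rintro _ ⟨x, hx, rfl⟩
  have h := glueScale_pos n
  have h' := glueScale_le n
  rw [glueMap_apply]
  constructor <;> nlinarith [hx.1, hx.2]

theorem glueMap_one_lt (n : ℕ) : glueMap n 1 < 1 := by
  rw [glueMap_apply]
  linarith [glueScale_pos n]

theorem tendsto_glueMap_one : Tendsto (fun n => glueMap n 1) atTop (𝓝 1) := by
  have h : Tendsto glueScale atTop (𝓝 0) := by
    have := (tendsto_pow_atTop_nhds_zero_of_lt_one (by norm_num)
      (by norm_num : (1 : ℝ) / 2 < 1)).div_const 8
    rwa [zero_div] at this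
  simpa only [glueMap_apply, mul_zero, sub_zero] using (h.const_mul (7 - 1)).const_sub 1

end Glue

section GlueModels

variable {U : ℕ → Set ℝ}

theorem glue_inter_glueWindow (hU : ∀ m, U m ⊆ Icc 0 1) (n : ℕ) :
    glue U ∩ glueWindow n = glueMap n '' U n := by
  refine subset_antisymm ?_ fun y hy =>
    ⟨mem_iUnion.mpr ⟨n, hy⟩, image_subset_glueWindow (hU n) n hy⟩
  rintro _ ⟨hy, hyn⟩
  obtain ⟨m, x, hx, rfl⟩ := mem_iUnion.mp hy
  obtain rfl := (glueMap_mem_glueWindow_iff (hU m hx)).mp hyn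
  exact mem_image_of_mem _ hx

theorem isSwitchSet_glue (hU : ∀ n, IsSwitchSet (U n)) : IsSwitchSet (glue U) := by
  have hsub : glue U ⊆ Ico 0 1 :=
    iUnion_subset fun n => (image_mono (hU n).subset_Ico).trans (glueMap_image_Ico_subset n)
  refine ⟨hsub, fun t => ?_⟩
  rcases lt_or_ge t 0 with h0 | h0
  · filter_upwards [nhdsWithin_le_nhds (Iio_mem_nhds h0)] with s hs
    exact iff_of_false (fun h => (hsub h).1.not_gt hs) (fun h => (hsub h).1.not_gt h0)
  rcases lt_or_ge t 1 with h1 | h1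
  · obtain ⟨n, hn⟩ := exists_mem_glueWindow h0 h1
    have hmem : ∀ s ∈ glueWindow n, s ∈ glue U ↔ s ∈ glueMap n '' U n := fun s hs => by
      rw [← glue_inter_glueWindow (fun m => (hU m).subset_Icc) n, mem_inter_iff, and_iff_left hs]
    have hU' := eventually_nhdsGE_mem_image_iff (glueMap n) ((hU n).eventually_nhdsGE
      ((glueMap n).symm t))
    rw [OrderIso.apply_symm_apply] at hU'
    filter_upwards [nhdsWithin_le_nhds ((isOpen_glueWindow n).mem_nhds hn), hU'] with s hs hsU
    rwa [hmem s hs, hmem t hn]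
  · filter_upwards [self_mem_nhdsWithin] with s hs
    exact iff_of_false (fun h => (hsub h).2.not_ge (h1.trans hs)) (fun h => (hsub h).2.not_ge h1)

theorem closure_leftSwitch_glue_inter (hU : ∀ n, IsSwitchSet (U n)) (n : ℕ) :
    closure (leftSwitch (glue U)) ∩ glueWindow n =
      glueMap n '' closure (leftSwitch (U n)) := by
  have hglue : glue U ∩ glueWindow n = glueMap n '' U n ∩ glueWindow n := by
    rw [glue_inter_glueWindow (fun m => (hU m).subset_Icc),
      inter_eq_left.mpr (image_subset_glueWindow (hU n).subset_Icc n)]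
  rw [closure_inter_of_inter_eq (isOpen_glueWindow n)
    (leftSwitch_inter_of_inter_eq (isOpen_glueWindow n) hglue), leftSwitch_image,
    ← (glueMap n).coe_toHomeomorph, ← Homeomorph.image_closure]
  exact inter_eq_left.mpr (image_subset_glueWindow (hU n).closure_leftSwitch_subset n)

theorem cbDeriv_glue_inter (hU : ∀ n, IsSwitchSet (U n)) (n : ℕ) (o : Ordinal) :
    cbDeriv (closure (leftSwitch (glue U))) o ∩ glueWindow n =
      glueMap n '' cbDeriv (closure (leftSwitch (U n))) o := by
  have hsub := image_subset_glueWindow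
    ((cbDeriv_subset _ o).trans (hU n).closure_leftSwitch_subset) n
  have hP := closure_leftSwitch_glue_inter hU n
  rw [← inter_eq_left.mpr (image_subset_glueWindow (hU n).closure_leftSwitch_subset n)] at hP
  rw [cbDeriv_inter_of_inter_eq (isOpen_glueWindow n) hP]
  exact (congrArg (· ∩ _) (cbDeriv_image (glueMap n).toHomeomorph _ o)).trans
    (inter_eq_left.mpr hsub)

variable {δ : ℕ → Ordinal} {Δ : Ordinal}

theorem cbDeriv_glue_subset (hU : ∀ n, IsRankModel (δ n) (U n)) (hδ : ∀ n, δ n < Δ) :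
    cbDeriv (closure (leftSwitch (glue U))) Δ ⊆ {1} := by
  intro y hy
  have hy01 := (isSwitchSet_glue fun n => (hU n).toIsSwitchSet).closure_leftSwitch_subset
    (cbDeriv_subset _ Δ hy)
  refine hy01.2.eq_or_lt.elim id fun hy1 => absurd hy fun hy => ?_
  obtain ⟨n, hn⟩ := exists_mem_glueWindow hy01.1 hy1
  have hmem : y ∈ glueMap n '' cbDeriv (closure (leftSwitch (U n))) Δ := by
    rw [← cbDeriv_glue_inter (fun n => (hU n).toIsSwitchSet)]
    exact ⟨hy, hn⟩
  have hempty := cbDeriv_antitone _ (Order.add_one_le_of_lt (hδ n)) |>.trans_eq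
    (hU n).cbDeriv_add_one
  simp only [subset_empty_iff.mp hempty, image_empty, mem_empty_iff_false] at hmem

theorem accPt_one_cbDeriv_glue (hU : ∀ n, IsRankModel (δ n) (U n)) {o : Ordinal}
    (ho : ∃ᶠ n in atTop, o ≤ δ n) :
    AccPt (1 : ℝ) (𝓟 (cbDeriv (closure (leftSwitch (glue U))) o)) := by
  rw [accPt_iff_frequently]
  refine tendsto_glueMap_one.frequently (ho.mono fun n hn => ⟨(glueMap_one_lt n).ne, ?_⟩)
  have h1 := mem_image_of_mem (glueMap n) (cbDeriv_antitone _ hn (hU n).one_mem_cbDeriv)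
  rw [← cbDeriv_glue_inter (fun n => (hU n).toIsSwitchSet)] at h1
  exact h1.1

theorem one_mem_cbDeriv_glue (hU : ∀ n, IsRankModel (δ n) (U n))
    (hδ : ∀ o < Δ, ∃ᶠ n in atTop, o ≤ δ n) {o : Ordinal} (ho : o ≤ Δ) :
    (1 : ℝ) ∈ cbDeriv (closure (leftSwitch (glue U))) o := by
  induction o using Ordinal.limitRecOn with
  | zero =>
    have h := accPt_one_cbDeriv_glue hU (Frequently.of_forall fun n => zero_le (a := δ n))
    rw [cbDeriv_zero] at h ⊢
    exact isClosed_closure.closure_subset (mem_closure_iff_clusterPt.mpr h.clusterPt)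
  | add_one o ih =>
    have ho' : o < Δ := (Order.lt_add_one_iff.mpr le_rfl).trans_le ho
    rw [cbDeriv_succ]
    exact ⟨ih ho'.le, accPt_one_cbDeriv_glue hU (hδ o ho')⟩
  | limit o hlim ih =>
    rw [cbDeriv_limit _ hlim]
    exact mem_iInter₂.mpr fun o' ho' => ih o' ho' (ho'.le.trans ho)

theorem cbDeriv_glue_eq (hU : ∀ n, IsRankModel (δ n) (U n)) (hδ : ∀ n, δ n < Δ)
    (hcof : ∀ o < Δ, ∃ᶠ n in atTop, o ≤ δ n) :
    cbDeriv (closure (leftSwitch (glue U))) Δ = {1} :=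
  subset_antisymm (cbDeriv_glue_subset hU hδ)
    (singleton_subset_iff.mpr (one_mem_cbDeriv_glue hU hcof le_rfl))

theorem isRankModel_glue (hU : ∀ n, IsRankModel (δ n) (U n)) (hδ : ∀ n, δ n < Δ)
    (hcof : ∀ o < Δ, ∃ᶠ n in atTop, o ≤ δ n) : IsRankModel Δ (glue U) where
  toIsSwitchSet := isSwitchSet_glue fun n => (hU n).toIsSwitchSet
  one_mem_cbDeriv := one_mem_cbDeriv_glue hU hcof le_rfl
  cbDeriv_add_one := by
    rw [cbDeriv_succ, cbDeriv_glue_eq hU hδ hcof]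
    exact cbStep_eq_empty_of_finite (finite_singleton 1)

end GlueModels

theorem exists_seq_frequently_eq {Δ : Ordinal.{u}} (hΔ : Δ ≠ 0) (hc : IsCountableOrdinal Δ) :
    ∃ δ : ℕ → Ordinal, (∀ n, δ n < Δ) ∧ ∀ o < Δ, ∃ᶠ n in atTop, δ n = o := by
  have : Countable (Iio Δ) := by
    rw [← Cardinal.mk_le_aleph0_iff, Cardinal.mk_Iio_ordinal, ← Cardinal.lift_aleph0.{u + 1, u},
      Cardinal.lift_le]
    exact hc
  have : Nonempty (Iio Δ) := ⟨⟨0, pos_iff_ne_zero.mpr hΔ⟩⟩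
  obtain ⟨g, hg⟩ := exists_surjective_nat (Iio Δ)
  refine ⟨fun n => g n.unpair.1, fun n => (g _).2, fun o ho => frequently_atTop.mpr fun k => ?_⟩
  obtain ⟨m, hm⟩ := hg ⟨o, ho⟩
  exact ⟨Nat.pair m k, Nat.right_le_pair m k, by simp only [Nat.unpair_pair, hm]⟩

theorem exists_isRankModel_cbDeriv_eq_singleton {Δ : Ordinal} (hΔ : Δ ≠ 0)
    (hc : IsCountableOrdinal Δ) (h : ∀ δ < Δ, ∃ U, IsRankModel δ U) :
    ∃ U, IsRankModel Δ U ∧ cbDeriv (closure (leftSwitch U)) Δ = {1} := by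
  obtain ⟨δ, hδ, hcof⟩ := exists_seq_frequently_eq hΔ hc
  choose U hU using fun n => h (δ n) (hδ n)
  have hcof' : ∀ o < Δ, ∃ᶠ n in atTop, o ≤ δ n := fun o ho => (hcof o ho).mono fun _ => ge_of_eq
  exact ⟨glue U, isRankModel_glue hU hδ hcof', cbDeriv_glue_eq hU hδ hcof'⟩

theorem exists_isRankModel (δ : Ordinal) (hc : IsCountableOrdinal δ) : ∃ U, IsRankModel δ U := by
  induction δ using WellFoundedLT.induction with
  | _ δ ih =>
    rcases eq_or_ne δ 0 with rfl | hδ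
    · exact ⟨_, isRankModel_zero⟩
    · exact (exists_isRankModel_cbDeriv_eq_singleton hδ hc fun δ' h' =>
        ih δ' h' ((Ordinal.card_le_card h'.le).trans hc)).imp fun _ => And.left

theorem IsLabelSet.exists_ne {κ : Cardinal} {C : Type} (hC : IsLabelSet κ C) (hκ : 3 ≤ κ)
    (z : C) : ∃ c, c ≠ z := by
  by_contra! h
  have hC1 : Cardinal.mk C ≤ 1 :=
    Cardinal.le_one_iff_subsingleton.mpr ⟨fun a b => (h a).trans (h b).symm⟩
  rcases lt_or_ge κ Cardinal.aleph0 with hfin | hinf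
  · have : κ ≤ 2 := by
      rw [← hC.2 hfin, ← one_add_one_eq_two]
      exact add_le_add_left hC1 1
    exact absurd (hκ.trans this) (by norm_num)
  · have : κ ≤ 1 := hC.1 hinf ▸ hC1
    exact absurd (hinf.trans this) (not_le.mpr Cardinal.one_lt_aleph0)

namespace UTree

open scoped Classical in
def ofSwitchSet {C : Type} (z c : C) {U : Set ℝ} (hU : IsSwitchSet U) : UTree C z where
  ρ := 1
  f t := if t ∈ U then c else z
  apply_eq_of_ge t ht := if_neg fun h => (hU.subset_Ico h).2.not_ge ht
  eventually_zero := ⟨0, zero_le_one, fun t ht => if_neg fun h => (hU.subset_Ico h).1.not_gt ht⟩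
  piecewise_const t _ := by
    obtain ⟨u, hu, hsub⟩ := mem_nhdsGE_iff_exists_Icc_subset.mp (hU.eventually_nhdsGE t)
    refine ⟨u - t, sub_pos.mpr hu, fun s hts hs _ => ?_⟩
    have hst : s ∈ U ↔ t ∈ U := hsub ⟨hts, by linarith⟩
    simp only [hst]

variable {C : Type} {z c : C}

open scoped Classical in
theorem badSet_eq_of_apply_eq (hcz : c ≠ z) {U : Set ℝ} (a : UTree C z)
    (ha : ∀ t < a.ρ, a.f t = if t ∈ U then c else z) : a.badSet = leftSwitch U ∩ Iio a.ρ := by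
  ext t
  simp only [badSet, mem_ofPred_eq, mem_inter_iff, mem_Iio, Real.mem_leftSwitch_iff]
  rw [and_comm]
  refine and_congr_left fun ht => forall₂_congr fun ε _ => ?_
  have hf : ∀ s ∈ Icc (t - ε) t, a.f s = if s ∈ U then c else z :=
    fun s hs => ha s (hs.2.trans_lt ht)
  constructor
  · rintro ⟨u, hu, v, hv, huv⟩
    rw [hf u hu, hf v hv] at huv
    by_cases hu' : u ∈ U
    · exact ⟨⟨u, hu, hu'⟩, v, hv, fun hv' => huv (by rw [if_pos hu', if_pos hv'])⟩
    · exact ⟨⟨v, hv, by_contra fun hv' => huv (by rw [if_neg hu', if_neg hv'])⟩, u, hu, hu'⟩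
  · rintro ⟨⟨u, hu, hu'⟩, v, hv, hv'⟩
    exact ⟨u, hu, v, hv, by rwa [hf u hu, hf v hv, if_pos hu', if_neg hv']⟩

theorem wedgeρ_restrict (a : UTree C z) {s : ℝ} (hs : s ≤ a.ρ) : wedgeρ (a.restrict s hs) a = s :=
  le_antisymm ((wedgeρ_le_min _ _).trans (min_le_left _ _))
    (le_wedgeρ ⟨le_min le_rfl hs, fun _ hu => if_pos hu⟩)

theorem dist_restrict (a : UTree C z) {s : ℝ} (hs : s ≤ a.ρ) :
    dist (a.restrict s hs) a = a.ρ - s := by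
  rw [dist_def, wedgeρ_restrict]
  change s + a.ρ - 2 * s = a.ρ - s
  ring

theorem Pset_restrict_ofSwitchSet (hcz : c ≠ z) {U : Set ℝ} (hU : IsSwitchSet U) {s : ℝ}
    (hs : s ≤ 1) : ((ofSwitchSet z c hU).restrict s hs).Pset = closure (leftSwitch U ∩ Iio s) := by
  rw [Pset, badSet_eq_of_apply_eq hcz _ fun t ht => if_pos ht]
  rfl

theorem comp_restrict_ofSwitchSet_le (hcz : c ≠ z) {U : Set ℝ} (hU : IsSwitchSet U) {α : Ordinal}
    (hα : cbDeriv (closure (leftSwitch U)) α ⊆ {1}) {s : ℝ} (hs : s < 1) :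
    ((ofSwitchSet z c hU).restrict s hs.le).comp ≤ α := by
  rw [comp, Pset_restrict_ofSwitchSet hcz]
  refine cbRank_le_of_cbDeriv_eq_empty (eq_empty_of_forall_notMem fun y hy => ?_)
  have hsub : closure (leftSwitch U ∩ Iio s) ⊆ closure (leftSwitch U) ∩ Iic s :=
    subset_inter (closure_mono inter_subset_left)
      (closure_minimal (inter_subset_right.trans Iio_subset_Iic_self) isClosed_Iic)
  have hy1 : y = 1 := hα (cbDeriv_mono (hsub.trans inter_subset_left) α hy)
  exact hs.not_ge (hy1 ▸ (hsub (cbDeriv_subset _ α hy)).2)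

theorem comp_ofSwitchSet (hcz : c ≠ z) {U : Set ℝ} {α : Ordinal} (hU : IsRankModel α U)
    (hα : α ≠ 0) : (ofSwitchSet z c hU.toIsSwitchSet).comp = α + 1 := by
  have hP : (ofSwitchSet z c hU.toIsSwitchSet).Pset = closure (leftSwitch U ∩ Iio 1) := by
    rw [Pset, badSet_eq_of_apply_eq hcz _ fun t _ => rfl]
    rfl
  have hacc : AccPt (1 : ℝ) (𝓟 (leftSwitch U)) := by
    rw [← mem_derivedSet, ← derivedSet_closure]
    have h1 := cbDeriv_antitone _ (Order.one_le_iff_ne_zero.mpr hα) hU.one_mem_cbDeriv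
    rw [cbDeriv_one] at h1
    exact h1.2
  have hL : leftSwitch U ∩ Iio 1 = leftSwitch U \ {1} := by
    ext t
    refine and_congr_right fun ht => ?_
    have := (hU.closure_leftSwitch_subset (subset_closure ht)).2
    exact ⟨fun h => h.ne, fun h => lt_of_le_of_ne this h⟩
  rw [comp, hP, hL, closure_diff_singleton_eq_of_accPt hacc]
  exact cbRank_eq_add_one ⟨1, hU.one_mem_cbDeriv⟩ hU.cbDeriv_add_one

end UTree

/-- `T_κ^{[α]}` is incomplete: there is a Cauchy sequence in `T_κ^{[α]}` whose limit in
`T_κ` has complexity `α + 1`, hence lies outside `T_κ^{[α]}`. -/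
theorem stmt16 (κ : Cardinal) (hκ : 3 ≤ κ) (C : Type) (z : C) (hC : IsLabelSet κ C)
    (α : Ordinal) (hα1 : 1 ≤ α) (hαc : IsCountableOrdinal α) :
    ¬CompleteSpace ↥(UTree.level z α) ∧
    ∃ (a : ℕ → UTree C z) (b : UTree C z), (∀ n, a n ∈ UTree.level z α) ∧
      CauchySeq a ∧ Filter.Tendsto a Filter.atTop (nhds b) ∧
      UTree.comp b = α + 1 ∧ b ∉ UTree.level z α := by
  obtain ⟨c, hcz⟩ := hC.exists_ne hκ z
  have hα0 : α ≠ 0 := Order.one_le_iff_ne_zero.mp hα1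
  obtain ⟨U, hU, hUα⟩ := exists_isRankModel_cbDeriv_eq_singleton hα0 hαc fun δ hδ =>
    exists_isRankModel δ ((Ordinal.card_le_card hδ.le).trans hαc)
  set b := UTree.ofSwitchSet z c hU.toIsSwitchSet
  have hs : ∀ n : ℕ, 1 - 1 / ((n : ℝ) + 1) < 1 := fun n => sub_lt_self 1 (by positivity)
  set a : ℕ → UTree C z := fun n => b.restrict _ (hs n).le
  have ha : ∀ n, a n ∈ UTree.level z α :=
    fun n => UTree.comp_restrict_ofSwitchSet_le hcz _ hUα.le (hs n)
  have hb : b.comp = α + 1 := UTree.comp_ofSwitchSet hcz hU hα0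
  have hbα : b ∉ UTree.level z α := fun h =>
    (Order.lt_add_one_iff.mpr le_rfl).not_ge (hb ▸ h : α + 1 ≤ α)
  have hlim : Tendsto a atTop (𝓝 b) := by
    rw [tendsto_iff_dist_tendsto_zero]
    have hdist : ∀ n : ℕ, dist (a n) b = 1 / ((n : ℝ) + 1) :=
      fun n => (b.dist_restrict _).trans (sub_sub_cancel 1 _)
    simpa only [hdist] using tendsto_one_div_add_atTop_nhds_zero_nat
  refine ⟨fun hcomplete => hbα ?_, a, b, ha, hlim.cauchySeq, hlim, hb, hbα⟩
  exact (completeSpace_coe_iff_isComplete.mp hcomplete).isClosed.mem_of_tendsto hlim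
    (Eventually.of_forall ha)

end
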